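/- Let X be a random variable with a Borel probability distribution μ supported in (0,∞), with mean E_μ[X] = λ and variance Var_μ(X) = σ² > 0. Then: (i) for every s > 0, E_μ[e^{sX}] ≥ (σ² + λ²·e^{(λ²+σ²)s/λ}) / (σ² + λ²); and (ii) for every s < 0, e^{λs} ≤ E_μ[e^{sX}] ≤ (σ² + λ²·e^{(λ²+σ²)s/λ}) / (σ² + λ²). -/

import Mathlib

open MeasureTheory Set Filter Topology
open scoped BigOperators ENNReal

noncomputable section

/-- The support of a measure: points all of whose open neighborhoods have
positive measure. -/
def msupport {E : Type*} [TopologicalSpace E] [MeasurableSpace E]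
    (μ : Measure E) : Set E :=
  {x | ∀ U : Set E, IsOpen U → x ∈ U → μ U ≠ 0}

/-! For `s ≠ 0` write `h x = (exp (s x) - 1) / x = s ∫₀¹ exp (s x t) dt`. Bounding
`exp (s x t)` below by its tangent at `s b t` shows that `h` lies on one side of its tangent
line at `b` (above for `s > 0`, below for `s < 0`); multiplied by `x > 0` this becomes a
quadratic bound for `exp (s x)`. For `b = E[X²] / E[X]` the `x (x - b)` term of that quadratic
has zero expectation, so its expectation is `1 + λ (exp (s b) - 1) / b`, which is the claimed
bound. The lower bound `exp (λ s)` is Jensen's inequality. -/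

lemma msupport_eq_support {E : Type*} [TopologicalSpace E] [MeasurableSpace E]
    (μ : Measure E) : msupport μ = μ.support := by
  ext x
  simp only [msupport, Measure.support_eq_forall_isOpen, pos_iff_ne_zero]
  exact forall_congr' fun _ => forall_comm

lemma ofReal_integral_le_lintegral_ofReal {α : Type*} [MeasurableSpace α] {μ : Measure α}
    {f : α → ℝ} (hf : Integrable f μ) :
    ENNReal.ofReal (∫ a, f a ∂μ) ≤ ∫⁻ a, ENNReal.ofReal (f a) ∂μ := by
  rw [integral_eq_lintegral_pos_part_sub_lintegral_neg_part hf]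
  exact (ENNReal.ofReal_le_ofReal (sub_le_self _ ENNReal.toReal_nonneg)).trans
    ENNReal.ofReal_toReal_le

namespace Real

lemma exp_mul_one_add_sub_le_exp (a y : ℝ) : exp a * (1 + (y - a)) ≤ exp y := by
  calc exp a * (1 + (y - a)) ≤ exp a * exp (y - a) :=
        mul_le_mul_of_nonneg_left (by linarith [add_one_le_exp (y - a)]) (exp_pos a).le
    _ = exp y := by rw [← exp_add, add_sub_cancel]

end Real

open Real

/-- `x ↦ 1 + x h(b) + x (x - b) h'(b)` for `h x = (exp (s x) - 1) / x`: the quadratic that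
agrees with `exp (s ·)` at `0` and to first order at `b`. -/
def expQuadInterp (s b x : ℝ) : ℝ :=
  1 + x * ((exp (s * b) - 1) / b) + x * (x - b) * ((s * exp (s * b) - (exp (s * b) - 1) / b) / b)

lemma expQuadInterp_eq (s b x : ℝ) : expQuadInterp s b x =
    1 + (exp (s * b) - 1) / b * x
      + (s * exp (s * b) - (exp (s * b) - 1) / b) / b * (x ^ 2 - b * x) := by
  rw [expQuadInterp]
  ring

lemma exp_sub_expQuadInterp_eq_integral {s b x : ℝ} (hs : s ≠ 0) (hb : b ≠ 0) (hx : x ≠ 0) :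
    exp (s * x) - expQuadInterp s b x
      = s * x * ∫ t in (0 : ℝ)..1, (exp (s * x * t) - exp (s * b * t) * (1 + s * t * (x - b))) := by
  set F : ℝ → ℝ := fun t => exp (s * x * t) / (s * x) - exp (s * b * t) / (s * b)
    - (x - b) / b * (t * exp (s * b * t) - exp (s * b * t) / (s * b))
  have hF : ∀ t, HasDerivAt F (exp (s * x * t) - exp (s * b * t) * (1 + s * t * (x - b))) t := by
    intro t
    have hexp : ∀ c, HasDerivAt (fun t => exp (c * t)) (exp (c * t) * c) t := fun c =>
      (hasDerivAt_exp _).comp t (by simpa using (hasDerivAt_id t).const_mul c)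
    refine ((((hexp (s * x)).div_const (s * x)).sub ((hexp (s * b)).div_const (s * b))).sub
      ((((hasDerivAt_id' t).mul (hexp (s * b))).sub
        ((hexp (s * b)).div_const (s * b))).const_mul ((x - b) / b))).congr_deriv ?_
    field_simp
    ring
  rw [intervalIntegral.integral_eq_sub_of_hasDerivAt (fun t _ => hF t)
    (by apply Continuous.intervalIntegrable; fun_prop)]
  simp only [F, expQuadInterp, mul_zero, mul_one, exp_zero]
  field_simp
  ring

lemma integral_exp_sub_tangent_nonneg (s b x : ℝ) :
    0 ≤ ∫ t in (0 : ℝ)..1, (exp (s * x * t) - exp (s * b * t) * (1 + s * t * (x - b))) := by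
  refine intervalIntegral.integral_nonneg zero_le_one fun t _ => sub_nonneg.2 ?_
  convert exp_mul_one_add_sub_le_exp (s * b * t) (s * x * t) using 2
  ring

lemma expQuadInterp_le_exp {s b x : ℝ} (hb : b ≠ 0) (hsx : 0 ≤ s * x) :
    expQuadInterp s b x ≤ exp (s * x) := by
  rcases eq_or_ne (s * x) 0 with h | h
  · rcases mul_eq_zero.1 h with rfl | rfl <;> simp [expQuadInterp]
  · have := exp_sub_expQuadInterp_eq_integral (left_ne_zero_of_mul h) hb (right_ne_zero_of_mul h)
    nlinarith [mul_nonneg hsx (integral_exp_sub_tangent_nonneg s b x)]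

lemma exp_le_expQuadInterp {s b x : ℝ} (hb : b ≠ 0) (hsx : s * x ≤ 0) :
    exp (s * x) ≤ expQuadInterp s b x := by
  rcases eq_or_ne (s * x) 0 with h | h
  · rcases mul_eq_zero.1 h with rfl | rfl <;> simp [expQuadInterp]
  · have := exp_sub_expQuadInterp_eq_integral (left_ne_zero_of_mul h) hb (right_ne_zero_of_mul h)
    nlinarith [mul_nonpos_of_nonpos_of_nonneg hsx (integral_exp_sub_tangent_nonneg s b x)]

section Moments

variable {Ω : Type*} [MeasurableSpace Ω] {μ : Measure Ω} [IsProbabilityMeasure μ] {X : Ω → ℝ}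

lemma integrable_expQuadInterp (hX : Integrable X μ) (hX2 : Integrable (fun ω => X ω ^ 2) μ)
    (s b : ℝ) : Integrable (fun ω => expQuadInterp s b (X ω)) μ := by
  simp only [expQuadInterp_eq]
  exact ((integrable_const 1).add (hX.const_mul _)).add ((hX2.sub (hX.const_mul b)).const_mul _)

lemma integral_expQuadInterp (hX : Integrable X μ) (hX2 : Integrable (fun ω => X ω ^ 2) μ)
    {b : ℝ} (hb : ∫ ω, X ω ^ 2 ∂μ = b * ∫ ω, X ω ∂μ) (s : ℝ) :
    ∫ ω, expQuadInterp s b (X ω) ∂μ = 1 + (∫ ω, X ω ∂μ) * ((exp (s * b) - 1) / b) := by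
  simp only [expQuadInterp_eq]
  generalize (s * exp (s * b) - (exp (s * b) - 1) / b) / b = B
  generalize (exp (s * b) - 1) / b = A
  have hlin : Integrable (fun ω => 1 + A * X ω) μ := (integrable_const 1).add (hX.const_mul A)
  have hquad : Integrable (fun ω => B * (X ω ^ 2 - b * X ω)) μ :=
    (hX2.sub (hX.const_mul b)).const_mul B
  rw [integral_add hlin hquad, integral_add (integrable_const 1) (hX.const_mul A),
    integral_const_mul, integral_const_mul, integral_sub hX2 (hX.const_mul b), integral_const_mul,
    hb]
  simp [mul_comm]

lemma ofReal_exp_mul_integral_le_lintegral (hX : Integrable X μ) (s : ℝ) :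
    ENNReal.ofReal (exp (s * ∫ ω, X ω ∂μ)) ≤ ∫⁻ ω, ENNReal.ofReal (exp (s * X ω)) ∂μ := by
  set m := ∫ ω, X ω ∂μ
  have hint : Integrable (fun ω => exp (s * m) * (1 + (s * X ω - s * m))) μ :=
    ((integrable_const 1).add ((hX.const_mul s).sub (integrable_const _))).const_mul _
  calc ENNReal.ofReal (exp (s * m))
      = ENNReal.ofReal (∫ ω, exp (s * m) * (1 + (s * X ω - s * m)) ∂μ) := by
        have hcentered : Integrable (fun ω => s * X ω - s * m) μ :=
          (hX.const_mul s).sub (integrable_const _)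
        rw [integral_const_mul, integral_add (integrable_const 1) hcentered,
          integral_sub (hX.const_mul s) (integrable_const _), integral_const_mul]
        simp [m]
    _ ≤ ∫⁻ ω, ENNReal.ofReal (exp (s * m) * (1 + (s * X ω - s * m))) ∂μ :=
        ofReal_integral_le_lintegral_ofReal hint
    _ ≤ ∫⁻ ω, ENNReal.ofReal (exp (s * X ω)) ∂μ :=
        lintegral_mono fun ω => ENNReal.ofReal_le_ofReal (exp_mul_one_add_sub_le_exp _ _)

end Moments

/-- bounds for the moment generating function of a positive
random variable with given mean and variance. -/
theorem mgf_bounds (μ : Measure ℝ) (hμ : IsProbabilityMeasure μ)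
    (hsupp : msupport μ ⊆ Ioi 0) (lam σ2 : ℝ) (hσ : 0 < σ2)
    (hmean : Integrable (fun x => x) μ) (hmean' : (∫ x, x ∂μ) = lam)
    (hvar : Integrable (fun x => x ^ 2) μ)
    (hvar' : (∫ x, x ^ 2 ∂μ) - lam ^ 2 = σ2) :
    (∀ s : ℝ, 0 < s →
      ENNReal.ofReal ((σ2 + lam ^ 2 * Real.exp ((lam ^ 2 + σ2) * s / lam)) /
          (σ2 + lam ^ 2)) ≤
        ∫⁻ x, ENNReal.ofReal (Real.exp (s * x)) ∂μ) ∧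
    (∀ s : ℝ, s < 0 →
      ENNReal.ofReal (Real.exp (lam * s)) ≤
          ∫⁻ x, ENNReal.ofReal (Real.exp (s * x)) ∂μ ∧
      ∫⁻ x, ENNReal.ofReal (Real.exp (s * x)) ∂μ ≤
        ENNReal.ofReal ((σ2 + lam ^ 2 * Real.exp ((lam ^ 2 + σ2) * s / lam)) /
          (σ2 + lam ^ 2))) := by
  have hpos : ∀ᵐ x ∂μ, 0 < x :=
    mem_of_superset μ.support_mem_ae (msupport_eq_support μ ▸ hsupp)
  have hlam : 0 < lam := by
    obtain ⟨x, hx, hxle⟩ := exists_notMem_null_le_integral hmean (ae_iff.1 hpos)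
    exact hmean' ▸ (not_not.1 hx).trans_le hxle
  set b := (lam ^ 2 + σ2) / lam with hb_def
  have hb : b ≠ 0 := by positivity
  have hsecond : ∫ x, x ^ 2 ∂μ = b * ∫ x, x ∂μ := by
    rw [hmean', hb_def]
    field_simp
    linarith
  have hQ : ∀ s, ∫ x, expQuadInterp s b x ∂μ
      = (σ2 + lam ^ 2 * exp ((lam ^ 2 + σ2) * s / lam)) / (σ2 + lam ^ 2) := by
    intro s
    rw [integral_expQuadInterp hmean hvar hsecond, hmean', hb_def]
    field_simp
    ring_nf
  refine ⟨fun s hs => ?_, fun s hs => ⟨?_, ?_⟩⟩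
  · rw [← hQ]
    refine (ofReal_integral_le_lintegral_ofReal (integrable_expQuadInterp hmean hvar s b)).trans
      (lintegral_mono_ae (hpos.mono fun x hx => ENNReal.ofReal_le_ofReal ?_))
    exact expQuadInterp_le_exp hb (mul_pos hs hx).le
  · simpa [hmean', mul_comm] using ofReal_exp_mul_integral_le_lintegral hmean s
  · have hle : ∀ᵐ x ∂μ, exp (s * x) ≤ expQuadInterp s b x :=
      hpos.mono fun x hx => exp_le_expQuadInterp hb (mul_neg_of_neg_of_pos hs hx).le
    rw [← hQ, ofReal_integral_eq_lintegral_ofReal (integrable_expQuadInterp hmean hvar s b)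
      (hle.mono fun x hx => (exp_pos _).le.trans hx)]
    exact lintegral_mono_ae (hle.mono fun x hx => ENNReal.ofReal_le_ofReal hx)
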